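/- arXiv:1608.01973 — 2 statements merged into one kernel-verified Lean document; each statement's English description precedes it below -/
import Mathlib

section
/- The minor minimal almost nonplanar graphs are exactly K_5 - e and K_{3,3} - e. -/
open SimpleGraph

def K5 : SimpleGraph (Fin 5) := ⊤

def K33 : SimpleGraph (Fin 3 ⊕ Fin 3) := completeBipartiteGraph (Fin 3) (Fin 3)

/-- `H` is a minor of `G`: branch-set (model) definition. -/
def IsMinor {W V : Type} (H : SimpleGraph W) (G : SimpleGraph V) : Prop :=
  ∃ f : W → Set V,
    (∀ w, (f w).Nonempty) ∧
    (∀ w, (G.induce (f w)).Connected) ∧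
    (Pairwise fun w₁ w₂ => Disjoint (f w₁) (f w₂)) ∧
    (∀ w₁ w₂, H.Adj w₁ w₂ → ∃ x ∈ f w₁, ∃ y ∈ f w₂, G.Adj x y)

/-- Planarity, via Wagner's theorem: no `K₅` minor and no `K₃,₃` minor. -/
def Planar {V : Type} (G : SimpleGraph V) : Prop :=
  ¬ IsMinor K5 G ∧ ¬ IsMinor K33 G

def ProperMinor {W V : Type} (H : SimpleGraph W) (G : SimpleGraph V) : Prop :=
  IsMinor H G ∧ ¬ IsMinor G H

def MinorMinimal (P : {V : Type} → SimpleGraph V → Prop) {V : Type} (G : SimpleGraph V) : Prop :=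
  P G ∧ ∀ (W : Type) (H : SimpleGraph W), ProperMinor H G → ¬ P H

/-- `G` together with the extra edge `uv`. -/
def AddEdge {V : Type} (G : SimpleGraph V) (u v : V) : SimpleGraph V :=
  G ⊔ fromEdgeSet {s(u, v)}

/-- `G - v`. -/
def DeleteVert {V : Type} (G : SimpleGraph V) (v : V) :=
  G.induce {u | u ≠ v}

/-- Disjoint union of graphs. -/
def DisjUnion {α β : Type} (G : SimpleGraph α) (H : SimpleGraph β) : SimpleGraph (α ⊕ β) :=
  (G.map Sum.inl) ⊔ (H.map Sum.inr)

/-- `K₂ ∪̇ G`: a `K₂` glued to `G` at the vertex `v` (a pendant vertex). -/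
def Pendant {V : Type} (G : SimpleGraph V) (v : V) : SimpleGraph (Option V) :=
  (G.map some) ⊔ fromEdgeSet {s(none, some v)}

/-- The result of subdividing the edge `uv` of `G`, the new vertex being `none`. -/
def SubdivideEdge {V : Type} (G : SimpleGraph V) (u v : V) : SimpleGraph (Option V) :=
  ((G.deleteEdges {s(u, v)}).map some) ⊔
    fromEdgeSet {s(none, some u), s(none, some v)}

/-- The contraction `G/uv` (realized on the same vertex set: `v` is absorbed into `u`
and left as an isolated vertex, which does not affect planarity). -/
def ContractEdge {V : Type} (G : SimpleGraph V) (u v : V) : SimpleGraph V where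
  Adj a b := a ≠ b ∧ ∃ x y, G.Adj x y ∧
    ((x = v ∧ a = u) ∨ (x ≠ v ∧ a = x)) ∧ ((y = v ∧ b = u) ∨ (y ≠ v ∧ b = y))
  symm := by
    constructor
    rintro a b ⟨hab, x, y, hxy, hx, hy⟩
    exact ⟨hab.symm, y, x, hxy.symm, hy, hx⟩
  loopless := by constructor; rintro a ⟨h, -⟩; exact h rfl

/-- `κ(G) ≥ k`: more than `k` vertices and no cut set of fewer than `k` vertices. -/
def VertexConnAtLeast {V : Type} [Fintype V] (G : SimpleGraph V) (k : ℕ) : Prop :=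
  k < Fintype.card V ∧
    ∀ U : Finset V, U.card < k → (G.induce ((↑U : Set V)ᶜ)).Connected

def K5e : SimpleGraph (Fin 5) := K5.deleteEdges {s(0, 1)}

def K33e : SimpleGraph (Fin 3 ⊕ Fin 3) := K33.deleteEdges {s(Sum.inl 0, Sum.inr 0)}

def K2 : SimpleGraph (Fin 2) := ⊤

/-- A planar graph is maximally planar (equivalently, a plane triangulation)
if adding any edge between nonadjacent vertices destroys planarity. -/
def MaximalPlanar {V : Type} (G : SimpleGraph V) : Prop :=
  Planar G ∧ ∀ u v : V, u ≠ v → ¬ G.Adj u v → ¬ Planar (AddEdge G u v)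

/-- Almost nonplanar. -/
def AN {V : Type} (G : SimpleGraph V) : Prop :=
  Planar G ∧ ∃ u v : V, u ≠ v ∧ ¬ G.Adj u v ∧ ¬ Planar (AddEdge G u v)

/-- Completely almost nonplanar. -/
def CAN {V : Type} (G : SimpleGraph V) : Prop :=
  Planar G ∧ (∃ u v : V, u ≠ v ∧ ¬ G.Adj u v) ∧
    ∀ u v : V, u ≠ v → ¬ G.Adj u v → ¬ Planar (AddEdge G u v)

/-- Completely apex: every vertex-deleted subgraph is planar. -/
def CompletelyApex {V : Type} (G : SimpleGraph V) : Prop :=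
  ∀ v : V, Planar (DeleteVert G v)

/-- Incompletely apex. -/
def IA {V : Type} (G : SimpleGraph V) : Prop :=
  ∃ v : V, ¬ Planar (DeleteVert G v)

/-- Incompletely edge apex. -/
def IE {V : Type} (G : SimpleGraph V) : Prop :=
  ∃ e ∈ G.edgeSet, ¬ Planar (G.deleteEdges {e})

/-- Incompletely contraction apex. -/
def IC {V : Type} (G : SimpleGraph V) : Prop :=
  ∃ u v : V, G.Adj u v ∧ ¬ Planar (ContractEdge G u v)

/-- Not apex. -/
def NA {V : Type} (G : SimpleGraph V) : Prop :=
  ∀ v : V, ¬ Planar (DeleteVert G v)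

/-- Not edge apex. -/
def NE {V : Type} (G : SimpleGraph V) : Prop :=
  ∀ e ∈ G.edgeSet, ¬ Planar (G.deleteEdges {e})

/-- Edge apex: some edge deletion (or the graph itself) is planar. -/
def EdgeApex {V : Type} (G : SimpleGraph V) : Prop :=
  Planar G ∨ ∃ e ∈ G.edgeSet, Planar (G.deleteEdges {e})

/-!
`K₅ - e` and `K₃,₃ - e` are planar, become nonplanar when the missing edge is put back, and
neither is a minor of the other, so both are minor minimal almost nonplanar.

Conversely, suppose `G + uv` has a `K₅` or `K₃,₃` minor. If the new edge joins two branch sets of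
a model, the model survives in `G` with one edge lost. If it lies inside a branch set that falls
apart in `G`, the two connected halves give a model of the graph obtained by splitting a vertex
into two nonadjacent vertices that share out its edges. A split of `K₃,₃` still contains
`K₃,₃ - e`; a split of `K₅` contains `K₅ - e`, or `K₃,₃ - e` when the four neighbours are shared
two and two. So every almost nonplanar graph has a `K₅ - e` or `K₃,₃ - e` minor; by minimality it
is also a minor of that graph, and finite graphs that are minors of each other are isomorphic.
-/

section

variable {U V W K : Type}

section Minor

variable {G : SimpleGraph V} {H : SimpleGraph W}

lemma isMinor_of_connected (f : W → Set V) (hconn : ∀ w, (G.induce (f w)).Connected)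
    (hdisj : Pairwise fun w₁ w₂ => Disjoint (f w₁) (f w₂))
    (hadj : ∀ w₁ w₂, H.Adj w₁ w₂ → ∃ x ∈ f w₁, ∃ y ∈ f w₂, G.Adj x y) : IsMinor H G :=
  ⟨f, fun w => Set.nonempty_coe_sort.mp (hconn w).nonempty, hconn, hdisj, hadj⟩

lemma eq_of_mem_of_pairwise_disjoint {f : W → Set V}
    (hdisj : Pairwise fun w₁ w₂ => Disjoint (f w₁) (f w₂)) {a b : W} {x : V} (ha : x ∈ f a) (hb : x ∈ f b) : a = b :=
  by_contra fun hab => Set.disjoint_left.mp (hdisj hab) ha hb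

lemma SimpleGraph.Copy.isMinor (φ : Copy H G) : IsMinor H G := by
  refine isMinor_of_connected (fun w => {φ w}) (fun w => ?_) (fun a b hab => ?_)
    fun a b hab => ⟨φ a, rfl, φ b, rfl, φ.toHom.map_adj hab⟩
  · rw [induce_singleton_eq_top]
    exact connected_top
  · exact Set.disjoint_singleton.mpr (φ.injective.ne hab)

lemma SimpleGraph.IsContained.isMinor (h : H ⊑ G) : IsMinor H G :=
  h.elim Copy.isMinor

lemma connected_induce_biUnion {s : Set W} {g : W → Set V} (hs : (H.induce s).Connected)
    (hg : ∀ w ∈ s, (G.induce (g w)).Connected)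
    (hadj : ∀ w₁ w₂, H.Adj w₁ w₂ → ∃ x ∈ g w₁, ∃ y ∈ g w₂, G.Adj x y) :
    (G.induce (⋃ w ∈ s, g w)).Connected := by
  have hsub : ∀ w (hw : w ∈ s), g w ⊆ ⋃ w ∈ s, g w := fun w hw => Set.subset_biUnion_of_mem hw
  have hlift : ∀ w (hw : w ∈ s) (x y : g w), (G.induce (⋃ w ∈ s, g w)).Reachable
      ⟨x, hsub w hw x.2⟩ ⟨y, hsub w hw y.2⟩ := fun w hw x y =>
    ((hg w hw).preconnected x y).map (G.induceHomOfLE (hsub w hw)).toHom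
  obtain ⟨w₀, hw₀⟩ := hs.nonempty
  obtain ⟨x₀, hx₀⟩ := (hg w₀ hw₀).nonempty
  rw [connected_iff_exists_forall_reachable]
  refine ⟨⟨x₀, hsub w₀ hw₀ hx₀⟩, ?_⟩
  suffices h : ∀ w : s, ∀ x (hx : x ∈ g w), (G.induce (⋃ w ∈ s, g w)).Reachable
      ⟨x₀, hsub w₀ hw₀ hx₀⟩ ⟨x, hsub w w.2 hx⟩ by
    rintro ⟨x, hx⟩
    obtain ⟨w, hw, hxw⟩ := Set.mem_iUnion₂.mp hx
    exact h ⟨w, hw⟩ x hxw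
  intro w
  induction (reachable_iff_reflTransGen _ _).mp (hs.preconnected ⟨w₀, hw₀⟩ w) with
  | refl => exact fun x hx => hlift w₀ hw₀ ⟨x₀, hx₀⟩ ⟨x, hx⟩
  | @tail w₁ w₂ _ hw₁w₂ ih =>
    obtain ⟨y, hy, z, hz, hyz⟩ := hadj _ _ hw₁w₂
    have hyz' : (G.induce (⋃ w ∈ s, g w)).Adj ⟨y, hsub _ w₁.2 hy⟩ ⟨z, hsub _ w₂.2 hz⟩ := hyz
    exact fun x hx => ((ih y hy).trans hyz'.reachable).trans (hlift _ w₂.2 ⟨z, hz⟩ ⟨x, hx⟩)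

lemma IsMinor.trans {A : SimpleGraph U} (hAH : IsMinor A H) (hHG : IsMinor H G) : IsMinor A G := by
  obtain ⟨f, -, hfconn, hfdisj, hfadj⟩ := hAH
  obtain ⟨g, -, hgconn, hgdisj, hgadj⟩ := hHG
  refine isMinor_of_connected (fun a => ⋃ w ∈ f a, g w)
    (fun a => connected_induce_biUnion (hfconn a) (fun w _ => hgconn w) hgadj) ?_ ?_
  · intro a b hab
    refine Set.disjoint_left.mpr fun x hxa hxb => ?_
    obtain ⟨w₁, hw₁, hx₁⟩ := Set.mem_iUnion₂.mp hxa
    obtain ⟨w₂, hw₂, hx₂⟩ := Set.mem_iUnion₂.mp hxb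
    obtain rfl := eq_of_mem_of_pairwise_disjoint hgdisj hx₁ hx₂
    exact Set.disjoint_left.mp (hfdisj hab) hw₁ hw₂
  · intro a b hab
    obtain ⟨w₁, hw₁, w₂, hw₂, hw⟩ := hfadj a b hab
    obtain ⟨x, hx, y, hy, hxy⟩ := hgadj w₁ w₂ hw
    exact ⟨x, Set.mem_biUnion hw₁ hx, y, Set.mem_biUnion hw₂ hy, hxy⟩

end Minor

section Finite

variable {G : SimpleGraph V} {H : SimpleGraph W}

lemma IsMinor.exists_injective (h : IsMinor H G) : ∃ r : W → V, Function.Injective r := by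
  obtain ⟨f, hne, -, hdisj, -⟩ := h
  choose r hr using hne
  exact ⟨r, fun a b hab => eq_of_mem_of_pairwise_disjoint hdisj (hr a) (hab ▸ hr b)⟩

lemma IsMinor.finite [Finite V] (h : IsMinor H G) : Finite W :=
  h.exists_injective.elim fun _ hr => Finite.of_injective _ hr

lemma IsMinor.natCard_le [Finite V] (h : IsMinor H G) : Nat.card W ≤ Nat.card V :=
  h.exists_injective.elim fun _ hr => Nat.card_le_card_of_injective _ hr

lemma IsMinor.card_dart_le [Fintype V] [Fintype W] [DecidableRel G.Adj] [DecidableRel H.Adj]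
    (h : IsMinor H G) : Fintype.card H.Dart ≤ Fintype.card G.Dart := by
  obtain ⟨f, -, -, hdisj, hadj⟩ := h
  choose x hx y hy hxy using hadj
  refine Fintype.card_le_of_injective (fun d => ⟨(x _ _ d.adj, y _ _ d.adj), hxy _ _ d.adj⟩)
    fun d e hde => ?_
  have hde₁ : x _ _ d.adj = x _ _ e.adj := congrArg (·.fst) hde
  have hde₂ : y _ _ d.adj = y _ _ e.adj := congrArg (·.snd) hde
  exact Dart.ext _ _ <| Prod.ext
    (eq_of_mem_of_pairwise_disjoint hdisj (hx _ _ d.adj) (hde₁ ▸ hx _ _ e.adj))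
    (eq_of_mem_of_pairwise_disjoint hdisj (hy _ _ d.adj) (hde₂ ▸ hy _ _ e.adj))

/-- The branch sets are forced to be singletons. -/
lemma IsMinor.isContained_of_natCard_le [Finite V] (h : IsMinor H G)
    (hcard : Nat.card V ≤ Nat.card W) : H ⊑ G := by
  obtain ⟨f, hne, -, hdisj, hadj⟩ := h
  choose r hr using hne
  have hinj : Function.Injective r := fun a b hab =>
    eq_of_mem_of_pairwise_disjoint hdisj (hr a) (hab ▸ hr b)
  have hsingle : ∀ w, ∀ x ∈ f w, x = r w := fun w x hx => by
    obtain ⟨w', rfl⟩ := (hinj.bijective_of_nat_card_le hcard).surjective x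
    rw [eq_of_mem_of_pairwise_disjoint hdisj (hr w') hx]
  refine ⟨⟨⟨r, fun {a b} hab => ?_⟩, hinj⟩⟩
  obtain ⟨x, hx, y, hy, hxy⟩ := hadj a b hab
  rwa [hsingle a x hx, hsingle b y hy] at hxy

lemma SimpleGraph.Copy.adj_iff_of_finite [Finite V] (φ : Copy G G) {a b : V} :
    G.Adj (φ a) (φ b) ↔ G.Adj a b := by
  refine ⟨fun h => ?_, φ.toHom.map_adj⟩
  have hinj := φ.injective.prodMap φ.injective
  let s : Set (V × V) := {p | G.Adj p.1 p.2}
  have hmaps : Set.MapsTo (Prod.map φ φ) s s := fun p (hp : G.Adj p.1 p.2) => φ.toHom.map_adj hp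
  obtain ⟨p, hp, hpab⟩ :=
    ((s.toFinite.injOn_iff_bijOn_of_mapsTo hmaps).mp hinj.injOn).surjOn (show (φ a, φ b) ∈ s from h)
  rwa [show p = (a, b) from hinj hpab] at hp

lemma SimpleGraph.IsContained.nonempty_iso [Finite V] [Finite W] (h₁ : H ⊑ G) (h₂ : G ⊑ H) :
    Nonempty (G ≃g H) := by
  obtain ⟨φ⟩ := h₁
  obtain ⟨ψ⟩ := h₂
  have hbij : Function.Bijective ψ :=
    ψ.injective.bijective_of_nat_card_le (Nat.card_le_card_of_injective φ φ.injective)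
  exact ⟨⟨Equiv.ofBijective ψ hbij, fun {a b} =>
    ⟨fun h => ((φ.comp ψ).adj_iff_of_finite).mp (φ.toHom.map_adj h), ψ.toHom.map_adj⟩⟩⟩

lemma IsMinor.nonempty_iso [Finite W] (h₁ : IsMinor H G) (h₂ : IsMinor G H) :
    Nonempty (G ≃g H) :=
  have : Finite V := h₂.finite
  (h₁.isContained_of_natCard_le h₂.natCard_le).nonempty_iso
    (h₂.isContained_of_natCard_le h₁.natCard_le)

end Finite

section AddEdge

variable {G : SimpleGraph V} {u v : V}

lemma induce_addEdge_of_not_mem {s : Set V} (h : ¬(u ∈ s ∧ v ∈ s)) :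
    (AddEdge G u v).induce s = G.induce s := by
  ext a b
  refine ⟨fun hab => ((sup_adj ..).mp hab).resolve_right ?_, fun hab => (sup_adj ..).mpr (.inl hab)⟩
  intro huv
  obtain ⟨⟨ha, hb⟩ | ⟨ha, hb⟩, -⟩ := (edge_adj ..).mp huv
  · exact h ⟨ha ▸ a.2, hb ▸ b.2⟩
  · exact h ⟨hb ▸ b.2, ha ▸ a.2⟩

lemma induce_addEdge {s : Set V} (hu : u ∈ s) (hv : v ∈ s) :
    (AddEdge G u v).induce s = G.induce s ⊔ edge ⟨u, hu⟩ ⟨v, hv⟩ := by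
  ext a b
  simp [AddEdge, edge, Subtype.ext_iff]

lemma reachable_or_reachable_of_preconnected_sup_edge {X : Type*} {G : SimpleGraph X} {a b : X}
    (h : (G ⊔ edge a b).Preconnected) (x : X) : G.Reachable a x ∨ G.Reachable b x := by
  induction (reachable_iff_reflTransGen _ _).mp (h a x) with
  | refl => exact .inl .rfl
  | tail _ hyz ih =>
    rcases (sup_adj ..).mp hyz with hyz | hyz
    · exact ih.imp (·.trans hyz.reachable) (·.trans hyz.reachable)
    · obtain ⟨⟨-, rfl⟩ | ⟨-, rfl⟩, -⟩ := (edge_adj ..).mp hyz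
      exacts [.inr .rfl, .inl .rfl]

lemma connected_induce_setOf_reachable {s : Set V} {r : V} (hr : r ∈ s) :
    (G.induce {x | ∃ hx : x ∈ s, (G.induce s).Reachable ⟨r, hr⟩ ⟨x, hx⟩}).Connected := by
  classical
  refine induce_connected_of_patches r ⟨hr, .rfl⟩ fun {x} ⟨hx, ⟨p⟩⟩ => ?_
  let q := p.map (Embedding.induce s).toHom
  refine ⟨{z | z ∈ q.support}, ?_, q.start_mem_support, q.end_mem_support,
    q.connected_induce_support.preconnected _ _⟩
  intro z hz
  obtain ⟨z', hz', rfl⟩ := List.mem_map.mp ((p.support_map _) ▸ hz)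
  exact ⟨z'.2, ⟨p.takeUntil z' hz'⟩⟩

/-- `P` and `Q` are the components of `G[s]` containing `u` and `v`. -/
lemma exists_partition_of_connected_addEdge {s : Set V} (hu : u ∈ s) (hv : v ∈ s)
    (hconn : ((AddEdge G u v).induce s).Connected) (hnc : ¬(G.induce s).Connected) :
    ∃ P Q, P ∪ Q = s ∧ Disjoint P Q ∧ (G.induce P).Connected ∧ (G.induce Q).Connected := by
  have hcover := reachable_or_reachable_of_preconnected_sup_edge
    ((induce_addEdge hu hv) ▸ hconn.preconnected)
  refine ⟨_, _, ?_, ?_, connected_induce_setOf_reachable hu, connected_induce_setOf_reachable hv⟩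
  · refine Set.Subset.antisymm (Set.union_subset (fun x hx => hx.1) fun x hx => hx.1)
      fun x hx => ?_
    rcases hcover ⟨x, hx⟩ with h | h
    exacts [.inl ⟨hx, h⟩, .inr ⟨hx, h⟩]
  · refine Set.disjoint_left.mpr fun x ⟨hx, hux⟩ ⟨_, hvx⟩ => hnc ?_
    refine (connected_iff_exists_forall_reachable _).mpr ⟨⟨u, hu⟩, fun y => ?_⟩
    exact (hcover y).elim id (hux.trans hvx.symm).trans

end AddEdge

section SplitVertex

variable {H : SimpleGraph K} {w : K} {S : Set K} {a b : K}

/-- The vertex `w` of `H` split into two nonadjacent vertices: `some w` keeps the edges from `w` to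
`S`, and `none` receives the other edges at `w`. -/
def SimpleGraph.splitVertex (H : SimpleGraph K) (w : K) (S : Set K) : SimpleGraph (Option K) :=
  fromRel fun x y => match x, y with
    | some a, some b => H.Adj a b ∧ (a = w → b ∈ S) ∧ (b = w → a ∈ S)
    | none, some b => H.Adj w b ∧ b ∉ S
    | _, _ => False

@[simp] lemma splitVertex_adj_some_some :
    (H.splitVertex w S).Adj (some a) (some b) ↔ H.Adj a b ∧ (a = w → b ∈ S) ∧ (b = w → a ∈ S) := by
  simp only [splitVertex, fromRel_adj, ne_eq, Option.some.injEq]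
  exact ⟨fun ⟨_, h⟩ => h.elim id fun ⟨h₁, h₂, h₃⟩ => ⟨h₁.symm, h₃, h₂⟩,
    fun h => ⟨h.1.ne, .inl h⟩⟩

@[simp] lemma splitVertex_adj_none_some :
    (H.splitVertex w S).Adj none (some b) ↔ H.Adj w b ∧ b ∉ S := by
  simp [splitVertex, fromRel_adj]

@[simp] lemma splitVertex_adj_some_none :
    (H.splitVertex w S).Adj (some a) none ↔ H.Adj w a ∧ a ∉ S := by
  rw [adj_comm, splitVertex_adj_none_some]

variable {G : SimpleGraph V}

lemma isMinor_splitVertex_of_partition {f : K → Set V} {P Q : Set V}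
    (hconn : ∀ k ≠ w, (G.induce (f k)).Connected)
    (hdisj : Pairwise fun a b => Disjoint (f a) (f b))
    (hadj : ∀ a b, H.Adj a b → ∃ x ∈ f a, ∃ y ∈ f b, G.Adj x y)
    (hPQ : P ∪ Q = f w) (hPQd : Disjoint P Q)
    (hP : (G.induce P).Connected) (hQ : (G.induce Q).Connected) :
    IsMinor (H.splitVertex w {k | ∃ x ∈ f k, ∃ y ∈ P, G.Adj x y}) G := by
  classical
  set g : Option K → Set V := fun o => o.elim Q (Function.update f w P)
  have hgw : g (some w) = P := by simp [g]
  have hg : ∀ k ≠ w, g (some k) = f k := fun k hk => by simp [g, hk]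
  have hPf : P ⊆ f w := hPQ ▸ Set.subset_union_left
  have hQf : Q ⊆ f w := hPQ ▸ Set.subset_union_right
  have hnone : ∀ b, H.Adj w b → b ∉ {k | ∃ x ∈ f k, ∃ y ∈ P, G.Adj x y} →
      ∃ x ∈ g none, ∃ y ∈ g (some b), G.Adj x y := by
    intro b hwb hb
    obtain ⟨x, hx, y, hy, hxy⟩ := hadj w b hwb
    rw [← hPQ] at hx
    refine ⟨x, hx.resolve_left fun hxP => hb ⟨y, hy, x, hxP, hxy.symm⟩, y, ?_, hxy⟩
    rwa [hg b hwb.ne']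
  refine isMinor_of_connected g ?_ ?_ ?_
  · rintro (_ | k)
    · exact hQ
    · rcases eq_or_ne k w with rfl | hk
      · rwa [hgw]
      · rw [hg k hk]; exact hconn k hk
  · rintro (_ | a) (_ | b) hab
    · exact absurd rfl hab
    · rcases eq_or_ne b w with rfl | hb
      · rw [hgw]; exact hPQd.symm
      · rw [hg b hb]; exact (hdisj (Ne.symm hb)).mono_left hQf
    · rcases eq_or_ne a w with rfl | ha
      · rw [hgw]; exact hPQd
      · rw [hg a ha]; exact (hdisj ha).mono_right hQf
    · have hab : a ≠ b := fun h => hab (congrArg some h)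
      rcases eq_or_ne a w with rfl | ha
      · rw [hgw, hg b hab.symm]; exact (hdisj hab).mono_left hPf
      rcases eq_or_ne b w with rfl | hb
      · rw [hgw, hg a hab]; exact (hdisj hab).mono_right hPf
      · rw [hg a ha, hg b hb]; exact hdisj hab
  · rintro (_ | a) (_ | b) hab
    · exact (hab.ne rfl).elim
    · exact hnone b ((splitVertex_adj_none_some.mp hab).1) (splitVertex_adj_none_some.mp hab).2
    · obtain ⟨x, hx, y, hy, hxy⟩ :=
        hnone a (splitVertex_adj_some_none.mp hab).1 (splitVertex_adj_some_none.mp hab).2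
      exact ⟨y, hy, x, hx, hxy.symm⟩
    · obtain ⟨hHab, haS, hbS⟩ := splitVertex_adj_some_some.mp hab
      rcases eq_or_ne a w with rfl | ha
      · obtain ⟨x, hx, y, hy, hxy⟩ := haS rfl
        exact ⟨y, hgw ▸ hy, x, (hg b hHab.ne').symm ▸ hx, hxy.symm⟩
      rcases eq_or_ne b w with rfl | hb
      · obtain ⟨x, hx, y, hy, hxy⟩ := hbS rfl
        exact ⟨x, (hg a hHab.ne).symm ▸ hx, y, hgw ▸ hy, hxy⟩
      · rw [hg a ha, hg b hb]; exact hadj a b hHab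

end SplitVertex

section MinorOfAddEdge

variable {H : SimpleGraph K} {G : SimpleGraph V} {u v : V}

lemma exists_adj_or_of_exists_adj_addEdge {s t : Set V}
    (h : ∃ x ∈ s, ∃ y ∈ t, (AddEdge G u v).Adj x y) :
    (∃ x ∈ s, ∃ y ∈ t, G.Adj x y) ∨ (u ∈ s ∧ v ∈ t) ∨ (u ∈ t ∧ v ∈ s) := by
  obtain ⟨x, hx, y, hy, hxy⟩ := h
  rcases (sup_adj ..).mp hxy with hxy | hxy
  · exact .inl ⟨x, hx, y, hy, hxy⟩
  · obtain ⟨⟨rfl, rfl⟩ | ⟨rfl, rfl⟩, -⟩ := (edge_adj ..).mp hxy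
    exacts [.inr (.inl ⟨hx, hy⟩), .inr (.inr ⟨hy, hx⟩)]

lemma exists_adj_of_exists_adj_addEdge {f : K → Set V}
    (hdisj : Pairwise fun a b => Disjoint (f a) (f b)) {a b p q : K} (ha : u ∈ f a)
    (hb : v ∈ f b) (h : ∃ x ∈ f p, ∃ y ∈ f q, (AddEdge G u v).Adj x y) (hne : s(p, q) ≠ s(a, b)) :
    ∃ x ∈ f p, ∃ y ∈ f q, G.Adj x y := by
  rcases exists_adj_or_of_exists_adj_addEdge h with h | ⟨hp, hq⟩ | ⟨hq, hp⟩
  · exact h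
  · rw [eq_of_mem_of_pairwise_disjoint hdisj hp ha,
      eq_of_mem_of_pairwise_disjoint hdisj hq hb] at hne
    exact absurd rfl hne
  · rw [eq_of_mem_of_pairwise_disjoint hdisj hp hb,
      eq_of_mem_of_pairwise_disjoint hdisj hq ha] at hne
    exact absurd Sym2.eq_swap hne

/-- `H - ab` arises when `uv` joins the branch sets of `a` and `b`, and a split of `H` at `w` when
`uv` is needed to connect the branch set of `w`. -/
theorem isMinor_or_of_isMinor_addEdge (h : IsMinor H (AddEdge G u v)) :
    IsMinor H G ∨ (∃ a b, IsMinor (H.deleteEdges {s(a, b)}) G) ∨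
      ∃ w S, IsMinor (H.splitVertex w S) G := by
  obtain ⟨f, -, hconn, hdisj, hadj⟩ := h
  have hconnG : ∀ k, ¬(u ∈ f k ∧ v ∈ f k) → (G.induce (f k)).Connected := fun k hk =>
    induce_addEdge_of_not_mem hk ▸ hconn k
  by_cases huv : ∃ a b, u ∈ f a ∧ v ∈ f b
  swap
  · refine .inl (isMinor_of_connected f (fun k => hconnG k fun h => huv ⟨k, k, h⟩) hdisj
      fun p q hpq => ?_)
    rcases exists_adj_or_of_exists_adj_addEdge (hadj p q hpq) with h | h | h
    exacts [h, absurd ⟨p, q, h⟩ huv, absurd ⟨q, p, h⟩ huv]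
  obtain ⟨a, b, ha, hb⟩ := huv
  have hadjG p q (hpq : H.Adj p q) := exists_adj_of_exists_adj_addEdge hdisj ha hb (hadj p q hpq)
  have hconnG' : ∀ k ≠ a, (G.induce (f k)).Connected := fun k hk =>
    hconnG k fun h => hk (eq_of_mem_of_pairwise_disjoint hdisj h.1 ha)
  rcases eq_or_ne a b with rfl | hab
  · have hadjG' p q (hpq : H.Adj p q) := hadjG p q hpq fun h =>
      hpq.ne ((Sym2.eq_iff.mp h).elim (fun h => h.1.trans h.2.symm) fun h => h.1.trans h.2.symm)
    by_cases hconna : (G.induce (f a)).Connected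
    · refine .inl (isMinor_of_connected f (fun k => ?_) hdisj hadjG')
      rcases eq_or_ne k a with rfl | hk
      exacts [hconna, hconnG' k hk]
    · obtain ⟨P, Q, hPQ, hPQd, hP, hQ⟩ :=
        exists_partition_of_connected_addEdge ha hb (hconn a) hconna
      exact .inr (.inr ⟨a, _,
        isMinor_splitVertex_of_partition hconnG' hdisj hadjG' hPQ hPQd hP hQ⟩)
  · refine .inr (.inl ⟨a, b, isMinor_of_connected f (fun k => ?_) hdisj fun p q hpq => ?_⟩)
    · rcases eq_or_ne k a with rfl | hk
      · exact hconnG k fun h => hab (eq_of_mem_of_pairwise_disjoint hdisj h.2 hb)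
      · exact hconnG' k hk
    · obtain ⟨hpq, hne⟩ := (deleteEdges_adj ..).mp hpq
      exact hadjG p q hpq hne

end MinorOfAddEdge

section SplitVertexContainment

variable {H : SimpleGraph K} {w i : K} {S : Set K}

lemma deleteEdges_isContained_splitVertex_of_forall_mem
    (hS : ∀ j, H.Adj w j → j ≠ i → j ∈ S) : H.deleteEdges {s(w, i)} ⊑ H.splitVertex w S := by
  refine ⟨⟨⟨some, fun {a b} hab => ?_⟩, Option.some_injective K⟩⟩
  obtain ⟨hHab, hne⟩ := (deleteEdges_adj ..).mp hab
  refine splitVertex_adj_some_some.mpr ⟨hHab, ?_, ?_⟩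
  · rintro rfl
    exact hS b hHab fun h => hne (by rw [h]; rfl)
  · rintro rfl
    exact hS a hHab.symm fun h => hne (by rw [h]; exact Sym2.eq_swap)

lemma deleteEdges_isContained_splitVertex_of_forall_not_mem
    (hS : ∀ j, H.Adj w j → j ≠ i → j ∉ S) : H.deleteEdges {s(w, i)} ⊑ H.splitVertex w S := by
  classical
  let φ : K → Option K := fun k => if k = w then none else some k
  have hφw : φ w = none := if_pos rfl
  have hφ : ∀ k ≠ w, φ k = some k := fun k hk => if_neg hk
  refine ⟨⟨⟨φ, fun {a b} hab => ?_⟩, fun a b hab => ?_⟩⟩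
  · obtain ⟨hHab, hne⟩ := (deleteEdges_adj ..).mp hab
    rcases eq_or_ne a w with rfl | ha
    · rw [hφw, hφ b hHab.ne', splitVertex_adj_none_some]
      exact ⟨hHab, hS b hHab fun h => hne (by rw [h]; rfl)⟩
    rcases eq_or_ne b w with rfl | hb
    · rw [hφw, hφ a ha, splitVertex_adj_some_none]
      exact ⟨hHab.symm, hS a hHab.symm fun h => hne (by rw [h]; exact Sym2.eq_swap)⟩
    · rw [hφ a ha, hφ b hb, splitVertex_adj_some_some]
      exact ⟨hHab, fun h => absurd h ha, fun h => absurd h hb⟩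
  · by_cases ha : a = w <;> by_cases hb : b = w <;> simp_all [φ]

variable (H w S) in
lemma exists_forall_mem_or_exists_forall_not_mem_or :
    (∃ i, ∀ j, H.Adj w j → j ≠ i → j ∈ S) ∨ (∃ i, ∀ j, H.Adj w j → j ≠ i → j ∉ S) ∨
      ∃ a b c d, H.Adj w a ∧ H.Adj w b ∧ H.Adj w c ∧ H.Adj w d ∧ a ≠ b ∧ c ≠ d ∧
        a ∈ S ∧ b ∈ S ∧ c ∉ S ∧ d ∉ S := by
  by_contra! h
  obtain ⟨h₁, h₂, h₃⟩ := h
  obtain ⟨c, hc, -, hcS⟩ := h₁ w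
  obtain ⟨d, hd, hdc, hdS⟩ := h₁ c
  obtain ⟨a, ha, -, haS⟩ := h₂ w
  obtain ⟨b, hb, hba, hbS⟩ := h₂ a
  exact hdS (h₃ a b c d ha hb hc hd hba.symm hdc.symm haS hbS hcS)

end SplitVertexContainment

section Kuratowski

instance : DecidableRel K5.Adj := inferInstanceAs (DecidableRel (⊤ : SimpleGraph (Fin 5)).Adj)

instance : DecidableRel K33.Adj := fun a b =>
  decidable_of_iff (a.isLeft ∧ b.isRight ∨ a.isRight ∧ b.isLeft)
    (Iff.of_eq (completeBipartiteGraph_adj ..)).symm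

instance : DecidableRel K5e.Adj := inferInstanceAs (DecidableRel (K5.deleteEdges {s(0, 1)}).Adj)

instance : DecidableRel K33e.Adj :=
  inferInstanceAs (DecidableRel (K33.deleteEdges {s(Sum.inl 0, Sum.inr 0)}).Adj)

/-- An automorphism of `K₅` taking the edge `01` to `ab`, for `a ≠ b`. -/
def K5Perm (a b : Fin 5) : Equiv.Perm (Fin 5) :=
  (Equiv.swap 1 (Equiv.swap 0 a b)).trans (Equiv.swap 0 a)

/-- An automorphism of `K₃,₃` taking the edge `(inl 0, inr 0)` to `ab`, for an edge `ab`. -/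
def K33Perm : Fin 3 ⊕ Fin 3 → Fin 3 ⊕ Fin 3 → Equiv.Perm (Fin 3 ⊕ Fin 3)
  | .inl i, .inr j => Equiv.sumCongr (Equiv.swap 0 i) (Equiv.swap 0 j)
  | .inr i, .inl j => (Equiv.sumComm _ _).trans (Equiv.sumCongr (Equiv.swap 0 j) (Equiv.swap 0 i))
  | _, _ => 1

lemma K5e_isContained_K5_deleteEdges (a b : Fin 5) : K5e ⊑ K5.deleteEdges {s(a, b)} := by
  have hadj : ∀ a b i j : Fin 5, K5e.Adj i j →
      (K5.deleteEdges {s(a, b)}).Adj (K5Perm a b i) (K5Perm a b j) := by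
    decide
  exact ⟨⟨⟨K5Perm a b, hadj a b _ _⟩, (K5Perm a b).injective⟩⟩

lemma K33e_isContained_K33_deleteEdges (a b : Fin 3 ⊕ Fin 3) :
    K33e ⊑ K33.deleteEdges {s(a, b)} := by
  have hadj : ∀ a b i j : Fin 3 ⊕ Fin 3, K33e.Adj i j →
      (K33.deleteEdges {s(a, b)}).Adj (K33Perm a b i) (K33Perm a b j) := by
    decide
  exact ⟨⟨⟨K33Perm a b, hadj a b _ _⟩, (K33Perm a b).injective⟩⟩

lemma K5e_or_K33e_isContained_K5_splitVertex (w : Fin 5) (S : Set (Fin 5)) :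
    K5e ⊑ K5.splitVertex w S ∨ K33e ⊑ K5.splitVertex w S := by
  rcases exists_forall_mem_or_exists_forall_not_mem_or K5 w S with
    ⟨i, hi⟩ | ⟨i, hi⟩ | ⟨a, b, c, d, ha, hb, hc, hd, hab, hcd, haS, hbS, hcS, hdS⟩
  · exact .inl ((K5e_isContained_K5_deleteEdges w i).trans
      (deleteEdges_isContained_splitVertex_of_forall_mem hi))
  · exact .inl ((K5e_isContained_K5_deleteEdges w i).trans
      (deleteEdges_isContained_splitVertex_of_forall_not_mem hi))
  have hac : a ≠ c := fun h => hcS (h ▸ haS)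
  have had : a ≠ d := fun h => hdS (h ▸ haS)
  have hbc : b ≠ c := fun h => hcS (h ▸ hbS)
  have hbd : b ≠ d := fun h => hdS (h ▸ hbS)
  simp only [K5, top_adj] at ha hb hc hd
  -- `K₃,₃ - e` with sides `{w, c, d}` and `{none, a, b}`, the missing edge being `w none`
  let φ := Sum.elim ![some w, some c, some d] ![none, some a, some b]
  have hφadj : ∀ {x y}, K33e.Adj x y → (K5.splitVertex w S).Adj (φ x) (φ y) := by
    rintro (x | x) (y | y) hxy <;> fin_cases x <;> fin_cases y <;>
      simp_all [φ, K33e, K33, K5, Ne.symm]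
  have hφ : Function.Injective φ := by
    rintro (x | x) (y | y) hxy <;> fin_cases x <;> fin_cases y <;> simp_all [φ, Ne.symm]
  exact .inr ⟨⟨⟨φ, hφadj⟩, hφ⟩⟩

lemma K33_degree (w : Fin 3 ⊕ Fin 3) : K33.degree w = 3 := by
  revert w; decide

lemma K33e_isContained_K33_splitVertex (w : Fin 3 ⊕ Fin 3) (S : Set (Fin 3 ⊕ Fin 3)) :
    K33e ⊑ K33.splitVertex w S := by
  classical
  rcases exists_forall_mem_or_exists_forall_not_mem_or K33 w S with
    ⟨i, hi⟩ | ⟨i, hi⟩ | ⟨a, b, c, d, ha, hb, hc, hd, hab, hcd, haS, hbS, hcS, hdS⟩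
  · exact (K33e_isContained_K33_deleteEdges w i).trans
      (deleteEdges_isContained_splitVertex_of_forall_mem hi)
  · exact (K33e_isContained_K33_deleteEdges w i).trans
      (deleteEdges_isContained_splitVertex_of_forall_not_mem hi)
  have hcard : ({a, b, c, d} : Finset _).card = 4 :=
    Finset.card_eq_four.mpr ⟨a, b, c, d, hab, fun h => hcS (h ▸ haS), fun h => hdS (h ▸ haS),
      fun h => hcS (h ▸ hbS), fun h => hdS (h ▸ hbS), hcd, rfl⟩
  have hsub : ({a, b, c, d} : Finset _) ⊆ K33.neighborFinset w := by
    simp [Finset.insert_subset_iff, ha, hb, hc, hd]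
  have hle := Finset.card_le_card hsub
  rw [hcard, card_neighborFinset_eq_degree, K33_degree] at hle
  omega

end Kuratowski

section AlmostNonplanar

variable {G : SimpleGraph V} {u v : V}

lemma Planar.of_isMinor {H : SimpleGraph W} (hG : Planar G) (h : IsMinor H G) : Planar H :=
  ⟨fun h5 => hG.1 (h5.trans h), fun h33 => hG.2 (h33.trans h)⟩

lemma SimpleGraph.Copy.addEdge_isContained {G' : SimpleGraph W} (φ : Copy G G') :
    AddEdge G u v ⊑ AddEdge G' (φ u) (φ v) := by
  refine ⟨⟨⟨φ, fun {a b} hab => ?_⟩, φ.injective⟩⟩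
  rcases (sup_adj ..).mp hab with h | h
  · exact (sup_adj ..).mpr (.inl (φ.toHom.map_adj h))
  · obtain ⟨h, hne⟩ := (edge_adj ..).mp h
    refine (sup_adj ..).mpr (.inr ((edge_adj ..).mpr ⟨?_, φ.injective.ne hne⟩))
    rcases h with ⟨rfl, rfl⟩ | ⟨rfl, rfl⟩
    exacts [.inl ⟨rfl, rfl⟩, .inr ⟨rfl, rfl⟩]

lemma le_addEdge_deleteEdges (u v : V) : G ≤ AddEdge (G.deleteEdges {s(u, v)}) u v := by
  intro a b hab
  by_cases h : s(a, b) = s(u, v)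
  · refine (sup_adj ..).mpr (.inr ((edge_adj ..).mpr ⟨?_, hab.ne⟩))
    rcases Sym2.eq_iff.mp h with ⟨rfl, rfl⟩ | ⟨rfl, rfl⟩
    exacts [.inl ⟨rfl, rfl⟩, .inr ⟨rfl, rfl⟩]
  · exact (sup_adj ..).mpr (.inl ((deleteEdges_adj ..).mpr ⟨hab, h⟩))

lemma AN.of_iso {G' : SimpleGraph W} (e : G ≃g G') (h : AN G) : AN G' := by
  obtain ⟨hP, u, v, huv, hnadj, hnp⟩ := h
  exact ⟨hP.of_isMinor e.symm.toCopy.isMinor, e u, e v, e.injective.ne huv,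
    fun h => hnadj (e.map_adj_iff.mp h),
    fun h => hnp (h.of_isMinor e.toCopy.addEdge_isContained.isMinor)⟩

lemma isMinor_K5e_or_K33e_of_isMinor_K5_addEdge (h : IsMinor K5 (AddEdge G u v)) :
    IsMinor K5e G ∨ IsMinor K33e G := by
  rcases isMinor_or_of_isMinor_addEdge h with h | ⟨a, b, h⟩ | ⟨w, S, h⟩
  · exact .inl ((IsContained.of_le (deleteEdges_le _)).isMinor.trans h)
  · exact .inl ((K5e_isContained_K5_deleteEdges a b).isMinor.trans h)
  · exact (K5e_or_K33e_isContained_K5_splitVertex w S).imp (·.isMinor.trans h) (·.isMinor.trans h)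

lemma isMinor_K33e_of_isMinor_K33_addEdge (h : IsMinor K33 (AddEdge G u v)) :
    IsMinor K33e G := by
  rcases isMinor_or_of_isMinor_addEdge h with h | ⟨a, b, h⟩ | ⟨w, S, h⟩
  · exact (IsContained.of_le (deleteEdges_le _)).isMinor.trans h
  · exact (K33e_isContained_K33_deleteEdges a b).isMinor.trans h
  · exact (K33e_isContained_K33_splitVertex w S).isMinor.trans h

lemma AN.isMinor_K5e_or_K33e (h : AN G) : IsMinor K5e G ∨ IsMinor K33e G := by
  obtain ⟨-, u, v, -, -, hnp⟩ := h
  rcases not_and_or.mp hnp with h | h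
  · exact isMinor_K5e_or_K33e_of_isMinor_K5_addEdge (not_not.mp h)
  · exact .inr (isMinor_K33e_of_isMinor_K33_addEdge (not_not.mp h))

lemma planar_K5e : Planar K5e :=
  ⟨fun h => h.card_dart_le.not_gt (by decide), fun h => by simpa using h.natCard_le⟩

lemma planar_K33e : Planar K33e :=
  ⟨fun h => h.card_dart_le.not_gt (by decide), fun h => h.card_dart_le.not_gt (by decide)⟩

lemma not_isMinor_K5e_K33e : ¬IsMinor K5e K33e := fun h => h.card_dart_le.not_gt (by decide)

lemma not_isMinor_K33e_K5e : ¬IsMinor K33e K5e := fun h => by simpa using h.natCard_le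

lemma AN_K5e : AN K5e :=
  ⟨planar_K5e, 0, 1, by decide, by decide,
    fun h => h.1 (IsContained.of_le (le_addEdge_deleteEdges (G := K5) 0 1)).isMinor⟩

lemma AN_K33e : AN K33e :=
  ⟨planar_K33e, .inl 0, .inr 0, by decide, by decide,
    fun h => h.2 (IsContained.of_le (le_addEdge_deleteEdges (G := K33) (.inl 0) (.inr 0))).isMinor⟩

lemma AN.minorMinimal {X : SimpleGraph V} (hX : AN X)
    (h5 : IsMinor K5e X → IsMinor X K5e) (h33 : IsMinor K33e X → IsMinor X K33e) :
    MinorMinimal (fun {_} H => AN H) X := by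
  refine ⟨hX, fun W H ⟨hHX, hXH⟩ hH => ?_⟩
  rcases hH.isMinor_K5e_or_K33e with h | h
  · exact hXH ((h5 (h.trans hHX)).trans h)
  · exact hXH ((h33 (h.trans hHX)).trans h)

end AlmostNonplanar

end

theorem stmt_3_general {V : Type} (G : SimpleGraph V) :
    MinorMinimal (fun {_} H => AN H) G ↔
      (Nonempty (G ≃g K5e) ∨ Nonempty (G ≃g K33e)) := by
  constructor
  · rintro ⟨hG, hmin⟩
    have hiso {W : Type} [Finite W] {Y : SimpleGraph W} (hY : AN Y) (hYG : IsMinor Y G) :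
        Nonempty (G ≃g Y) :=
      hYG.nonempty_iso (not_not.mp fun hGY => hmin W Y ⟨hYG, hGY⟩ hY)
    exact hG.isMinor_K5e_or_K33e.imp (hiso AN_K5e) (hiso AN_K33e)
  · rintro (⟨⟨e⟩⟩ | ⟨⟨e⟩⟩)
    · exact (AN_K5e.of_iso e.symm).minorMinimal (fun _ => e.toCopy.isMinor)
        fun h => absurd (h.trans e.toCopy.isMinor) not_isMinor_K33e_K5e
    · exact (AN_K33e.of_iso e.symm).minorMinimal
        (fun h => absurd (h.trans e.toCopy.isMinor) not_isMinor_K5e_K33e) fun _ => e.toCopy.isMinor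

/-- The minor minimal almost nonplanar graphs are exactly `K₅ - e` and `K₃,₃ - e`. -/
theorem stmt_3 {V : Type} [Fintype V] (G : SimpleGraph V) :
    MinorMinimal (fun {_} H => AN H) G ↔
      (Nonempty (G ≃g K5e) ∨ Nonempty (G ≃g K33e)) :=
  stmt_3_general G
end

section
/- If G is homeomorphic to K_5 or K_{3,3} and {a,b} is a cut set of G with G - a, b = G_1 ⊔ G_2, then one of the induced subgraphs on V(G_1) ∪ {a,b} and V(G_2) ∪ {a,b} is a path from a to b. -/
open SimpleGraph

/-- `G` is a subdivision of `H` (homeomorphic to `H`): `G` is obtained, up to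
isomorphism, from `H` by repeatedly subdividing edges. -/
inductive IsSubdivisionOf : {V : Type} → SimpleGraph V → {W : Type} → SimpleGraph W → Prop
  | iso {V W : Type} {G : SimpleGraph V} {H : SimpleGraph W} (e : G ≃g H) :
      IsSubdivisionOf G H
  | step {V W : Type} {G : SimpleGraph V} {H : SimpleGraph W} (u v : W) (h : H.Adj u v)
      (hs : IsSubdivisionOf G (SubdivideEdge H u v)) : IsSubdivisionOf G H

/-- The induced subgraph of `G` on `S` is precisely a path from `a` to `b`. -/
def InducedIsPath {V : Type} (G : SimpleGraph V) (S : Set V) (a b : V) : Prop :=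
  ∃ p : G.Walk a b, p.IsPath ∧ (∀ v : V, v ∈ p.support ↔ v ∈ S) ∧
    (∀ x y : V, x ∈ S → y ∈ S → (G.Adj x y ↔ s(x, y) ∈ p.edges))

/-!
Call a graph *path-sided* if every vertex has two neighbours, no vertex is a cut vertex, and for
every 2-separation `{a, b}` one of the two sides together with `a, b` induces an `a`-`b` path.
`K₅` and `K₃,₃` are path-sided, the separation condition holding vacuously as they are
3-connected, and path-sidedness survives the subdivision of an edge `uv` by a new vertex `w`
(the vertex `none` of `SubdivideEdge`). Take a 2-separation of the subdivided graph.
If `w` lies on a side, then `{a, b}` also separates the original graph and its path side lifts,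
the edge `uv` becoming `u w v`; when that side is `{w}` alone, it is the path `a w b`.
If `w = a`, then, `b` being no cut vertex, `u` and `v` lie on different sides, `{u, b}` separates
the original graph, and its path side from `u` to `b` is extended by `w u`, or, on the side
of `v`, starts with the edge `uv`, which is rerouted through `w`.
-/

lemma Sym2.exists_mem_ne_of_ne {α : Type} {x y : α} (hxy : x ≠ y) (c : α) :
    ∃ z ∈ s(x, y), z ≠ c := by
  by_cases hx : x = c
  · exact ⟨y, Sym2.mem_mk_right x y, fun hy => hxy (hx.trans hy.symm)⟩
  · exact ⟨x, Sym2.mem_mk_left x y, hx⟩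

namespace InducedIsPath

variable {V : Type} {G : SimpleGraph V} {S : Set V} {a b : V}

lemma symm (h : InducedIsPath G S a b) : InducedIsPath G S b a := by
  obtain ⟨p, hp, hsupp, hedges⟩ := h
  exact ⟨p.reverse, hp.reverse, by simpa using hsupp, by simpa using hedges⟩

lemma of_adj (h : G.Adj a b) : InducedIsPath G {a, b} a b := by
  refine ⟨h.toWalk, by simp [h.ne], by simp, ?_⟩
  simp only [Set.mem_insert_iff, Set.mem_singleton_iff]
  rintro x y (rfl | rfl) (rfl | rfl) <;> simp [h, h.symm, h.ne, h.ne.symm]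

lemma cons {c : V} (h : InducedIsPath G S a b) (hca : G.Adj c a) (hc : c ∉ S)
    (honly : ∀ x ∈ S, G.Adj c x → x = a) : InducedIsPath G (insert c S) c b := by
  obtain ⟨p, hp, hsupp, hedges⟩ := h
  refine ⟨.cons hca p, hp.cons (by rwa [hsupp]), by simp [hsupp], ?_⟩
  have hcS : ∀ x ∈ S, G.Adj c x ↔ s(c, x) ∈ (Walk.cons hca p).edges := fun x hx => by
    refine ⟨fun hcx => ?_, fun he => (Walk.cons hca p).adj_of_mem_edges he⟩
    simp [honly x hx hcx]
  rintro x y (rfl | hx) (rfl | hy)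
  · exact iff_of_false G.irrefl fun he => G.irrefl ((Walk.cons hca p).adj_of_mem_edges he)
  · exact hcS y hy
  · rw [G.adj_comm, Sym2.eq_swap]; exact hcS x hx
  · have hxc : x ≠ c := fun h => hc (h ▸ hx)
    have hyc : y ≠ c := fun h => hc (h ▸ hy)
    simp [hedges x y hx hy, hxc, hyc]

lemma tail {c : V} (h : InducedIsPath G S a b) (hac : G.Adj a c) (hc : c ∈ S) :
    InducedIsPath G (S \ {a}) c b := by
  obtain ⟨p, hp, hsupp, hedges⟩ := h
  have ha : a ∈ S := (hsupp a).mp p.start_mem_support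
  have hsnd := hp.eq_snd_of_mem_edges ((hedges a c ha hc).mp hac)
  cases p with
  | nil => exact absurd ((hedges a c ha hc).mp hac) (by simp)
  | cons hd q =>
    rw [Walk.cons_isPath_iff] at hp
    rw [Walk.snd_cons] at hsnd
    subst hsnd
    refine ⟨q, hp.1, fun z => ?_, fun x y hx hy => ?_⟩
    · have := hsupp z
      simp only [Walk.support_cons, List.mem_cons] at this
      constructor
      · intro hz
        exact ⟨this.mp (Or.inr hz), fun h => hp.2 ((Set.mem_singleton_iff.mp h) ▸ hz)⟩
      · rintro ⟨hzS, hza⟩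
        exact (this.mpr hzS).resolve_left hza
    · have hxa : x ≠ a := hx.2
      have hya : y ≠ a := hy.2
      rw [hedges x y hx.1 hy.1, Walk.edges_cons, List.mem_cons]
      simp [hxa, hya]

lemma subset_pair_of_adj (h : InducedIsPath G S a b) (hab : G.Adj a b) : S ⊆ {a, b} := by
  obtain ⟨p, hp, hsupp, hedges⟩ := h
  have ha : a ∈ S := (hsupp a).mp p.start_mem_support
  have hb : b ∈ S := (hsupp b).mp p.end_mem_support
  intro z hz
  rw [← hsupp, hp.eq_adj_toWalk_of_mem_edges ((hedges a b ha hb).mp hab)] at hz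
  simpa using hz

lemma map_iso {W : Type} {H : SimpleGraph W} (e : G ≃g H) (h : InducedIsPath G S a b) :
    InducedIsPath H (e '' S) (e a) (e b) := by
  obtain ⟨p, hp, hsupp, hedges⟩ := h
  refine ⟨p.map e.toHom, hp.map e.injective, fun z => ?_, ?_⟩
  · simp [Walk.support_map, hsupp]
  · rintro _ _ ⟨x, hx, rfl⟩ ⟨y, hy, rfl⟩
    rw [Walk.edges_map, ← Sym2.map_mk, e.map_adj_iff]
    exact (hedges x y hx hy).trans
      (List.mem_map_of_injective (Sym2.map.injective e.injective)).symm

end InducedIsPath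

section PathSided

variable {V : Type}

def MinDegreeTwo (G : SimpleGraph V) : Prop :=
  ∀ x, ∃ y z, y ≠ z ∧ G.Adj x y ∧ G.Adj x z

def NoCutVertex (G : SimpleGraph V) : Prop :=
  ∀ c x y : V, x ≠ c → y ≠ c → ∃ p : G.Walk x y, c ∉ p.support

structure IsTwoSeparation (G : SimpleGraph V) (a b : V) (S₁ S₂ : Set V) : Prop where
  ne : a ≠ b
  union_eq : S₁ ∪ S₂ = {v | v ≠ a ∧ v ≠ b}
  disjoint : Disjoint S₁ S₂
  nonempty_left : S₁.Nonempty
  nonempty_right : S₂.Nonempty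
  not_adj : ∀ x ∈ S₁, ∀ y ∈ S₂, ¬ G.Adj x y

def TwoSeparationHasPathSide (G : SimpleGraph V) : Prop :=
  ∀ a b S₁ S₂, IsTwoSeparation G a b S₁ S₂ →
    InducedIsPath G (S₁ ∪ {a, b}) a b ∨ InducedIsPath G (S₂ ∪ {a, b}) a b

structure PathSided (G : SimpleGraph V) : Prop where
  minDegreeTwo : MinDegreeTwo G
  noCutVertex : NoCutVertex G
  twoSeparationHasPathSide : TwoSeparationHasPathSide G

end PathSided

lemma MinDegreeTwo.exists_adj_ne {V : Type} {G : SimpleGraph V} (h : MinDegreeTwo G) (x c : V) :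
    ∃ y, G.Adj x y ∧ y ≠ c := by
  obtain ⟨y, z, hyz, hy, hz⟩ := h x
  by_cases hyc : y = c
  · exact ⟨z, hz, fun hzc => hyz (hyc.trans hzc.symm)⟩
  · exact ⟨y, hy, hyc⟩

lemma NoCutVertex.exists_adj_boundary {V : Type} {G : SimpleGraph V} (h : NoCutVertex G)
    {c x y : V} {S : Set V} (hx : x ∈ S) (hy : y ∉ S) (hxc : x ≠ c) (hyc : y ≠ c) :
    ∃ x' ∈ S, ∃ y' ∉ S, y' ≠ c ∧ G.Adj x' y' := by
  obtain ⟨p, hp⟩ := h c x y hxc hyc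
  obtain ⟨d, hd, hd₁, hd₂⟩ := p.exists_boundary_dart S hx hy
  exact ⟨d.fst, hd₁, d.snd, hd₂, fun h => hp (h ▸ p.dart_snd_mem_support_of_mem_darts hd), d.adj⟩

namespace IsTwoSeparation

variable {V : Type} {G : SimpleGraph V} {a b : V} {S₁ S₂ : Set V}

lemma symm (h : IsTwoSeparation G a b S₁ S₂) : IsTwoSeparation G a b S₂ S₁ :=
  ⟨h.ne, Set.union_comm S₁ S₂ ▸ h.union_eq, h.disjoint.symm, h.nonempty_right, h.nonempty_left,
    fun x hx y hy hxy => h.not_adj y hy x hx hxy.symm⟩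

lemma swap (h : IsTwoSeparation G a b S₁ S₂) : IsTwoSeparation G b a S₁ S₂ :=
  ⟨h.ne.symm, by simp only [h.union_eq, and_comm], h.disjoint, h.nonempty_left, h.nonempty_right,
    h.not_adj⟩

lemma mem_union_iff (h : IsTwoSeparation G a b S₁ S₂) {z : V} :
    z ∈ S₁ ∪ S₂ ↔ z ≠ a ∧ z ≠ b := by
  rw [h.union_eq]; rfl

lemma map_iso {W : Type} {H : SimpleGraph W} (e : G ≃g H) (h : IsTwoSeparation G a b S₁ S₂) :
    IsTwoSeparation H (e a) (e b) (e '' S₁) (e '' S₂) where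
  ne := e.injective.ne h.ne
  union_eq := by
    ext w
    obtain ⟨x, rfl⟩ := e.surjective w
    simp [← Set.image_union, e.injective.mem_set_image, h.mem_union_iff]
  disjoint := (Set.disjoint_image_iff e.injective).mpr h.disjoint
  nonempty_left := h.nonempty_left.image e
  nonempty_right := h.nonempty_right.image e
  not_adj := by
    rintro _ ⟨x, hx, rfl⟩ _ ⟨y, hy, rfl⟩
    rw [e.map_adj_iff]
    exact h.not_adj x hx y hy

end IsTwoSeparation

section Iso

variable {V W : Type} {G : SimpleGraph V} {H : SimpleGraph W}

lemma MinDegreeTwo.of_iso (e : G ≃g H) (h : MinDegreeTwo H) : MinDegreeTwo G := by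
  intro x
  obtain ⟨y, z, hyz, hy, hz⟩ := h (e x)
  exact ⟨e.symm y, e.symm z, e.symm.injective.ne hyz, by simpa using e.symm.map_adj_iff.mpr hy,
    by simpa using e.symm.map_adj_iff.mpr hz⟩

lemma NoCutVertex.of_iso (e : G ≃g H) (h : NoCutVertex H) : NoCutVertex G := by
  intro c x y hx hy
  obtain ⟨p, hp⟩ := h (e c) (e x) (e y) (e.injective.ne hx) (e.injective.ne hy)
  refine ⟨(p.map e.symm.toHom).copy (by simp) (by simp), ?_⟩
  simp only [Walk.support_copy, Walk.support_map, List.mem_map, not_exists, not_and]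
  rintro w hw rfl
  exact hp (by simpa using hw)

lemma TwoSeparationHasPathSide.of_iso (e : G ≃g H) (h : TwoSeparationHasPathSide H) :
    TwoSeparationHasPathSide G := by
  intro a b S₁ S₂ hsep
  have hmap : ∀ S : Set V, InducedIsPath H (e '' S ∪ {e a, e b}) (e a) (e b) →
      InducedIsPath G (S ∪ {a, b}) a b := fun S hS => by
    simpa [Set.image_union, Set.image_insert_eq, Set.image_image] using hS.map_iso e.symm
  exact (h _ _ _ _ (hsep.map_iso e)).imp (hmap S₁) (hmap S₂)

lemma PathSided.of_iso (e : G ≃g H) (h : PathSided H) : PathSided G :=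
  ⟨h.minDegreeTwo.of_iso e, h.noCutVertex.of_iso e, h.twoSeparationHasPathSide.of_iso e⟩

end Iso

lemma pathSided_K5 : PathSided K5 where
  minDegreeTwo := by unfold MinDegreeTwo K5; decide
  noCutVertex c x y hx hy := by
    by_cases hxy : x = y
    · subst hxy
      exact ⟨.nil, by simpa using hx.symm⟩
    · have hadj : K5.Adj x y := (top_adj x y).mpr hxy
      exact ⟨hadj.toWalk, by simp [hx.symm, hy.symm]⟩
  twoSeparationHasPathSide a b S₁ S₂ hsep := by
    obtain ⟨x, hx⟩ := hsep.nonempty_left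
    obtain ⟨y, hy⟩ := hsep.nonempty_right
    exact absurd ((top_adj x y).mpr (hsep.disjoint.ne_of_mem hx hy)) (hsep.not_adj x hx y hy)

lemma K33_adj_inl_inr (i j : Fin 3) : K33.Adj (.inl i) (.inr j) := by simp [K33]

lemma exists_K33_common_neighbor (a b x y : Fin 3 ⊕ Fin 3) (hxy : ¬ K33.Adj x y) :
    ∃ z, z ≠ a ∧ z ≠ b ∧ K33.Adj x z ∧ K33.Adj z y := by
  have avoid : ∀ a b : Fin 3 ⊕ Fin 3,
      (∃ k, .inl k ≠ a ∧ .inl k ≠ b) ∧ ∃ k, .inr k ≠ a ∧ .inr k ≠ b := by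
    decide
  rcases x with i | i <;> rcases y with j | j
  · obtain ⟨k, hka, hkb⟩ := (avoid a b).2
    exact ⟨.inr k, hka, hkb, K33_adj_inl_inr i k, (K33_adj_inl_inr j k).symm⟩
  · exact absurd (K33_adj_inl_inr i j) hxy
  · exact absurd (K33_adj_inl_inr j i).symm hxy
  · obtain ⟨k, hka, hkb⟩ := (avoid a b).1
    exact ⟨.inl k, hka, hkb, (K33_adj_inl_inr k i).symm, K33_adj_inl_inr k j⟩

lemma pathSided_K33 : PathSided K33 where
  minDegreeTwo := by simp only [MinDegreeTwo, K33, completeBipartiteGraph_adj]; decide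
  noCutVertex c x y hx hy := by
    by_cases hxy : K33.Adj x y
    · exact ⟨hxy.toWalk, by simp [hx.symm, hy.symm]⟩
    obtain ⟨z, hzc, -, hxz, hzy⟩ := exists_K33_common_neighbor c c x y hxy
    exact ⟨.cons hxz hzy.toWalk, by simp [hx.symm, hy.symm, hzc.symm]⟩
  twoSeparationHasPathSide a b S₁ S₂ hsep := by
    obtain ⟨x, hx⟩ := hsep.nonempty_left
    obtain ⟨y, hy⟩ := hsep.nonempty_right
    by_cases hxy : K33.Adj x y
    · exact absurd hxy (hsep.not_adj x hx y hy)
    obtain ⟨z, hza, hzb, hxz, hzy⟩ := exists_K33_common_neighbor a b x y hxy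
    rcases hsep.mem_union_iff.mpr ⟨hza, hzb⟩ with hz | hz
    · exact absurd hzy (hsep.not_adj z hz y hy)
    · exact absurd hxz (hsep.not_adj x hx z hz)

section Subdivision

variable {V : Type} {K : SimpleGraph V} {u v : V}

lemma subdivideEdge_comm : SubdivideEdge K u v = SubdivideEdge K v u := by
  ext x y
  simp only [SubdivideEdge, Sym2.eq_swap (a := u), Set.pair_comm (s(none, some u))]

lemma subdivideEdge_adj_some_some {x y : V} :
    (SubdivideEdge K u v).Adj (some x) (some y) ↔ K.Adj x y ∧ s(x, y) ≠ s(u, v) := by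
  simpa [SubdivideEdge] using
    map_adj_apply (G := K.deleteEdges {s(u, v)}) (f := .some) (a := x) (b := y)

lemma subdivideEdge_adj_none_some {x : V} :
    (SubdivideEdge K u v).Adj none (some x) ↔ x ∈ s(u, v) := by
  simp [SubdivideEdge, SimpleGraph.map_adj', eq_comm]

lemma subdivideEdge_eq_of_adj_none {x : Option V} (h : (SubdivideEdge K u v).Adj none x) :
    x = some u ∨ x = some v := by
  rcases x with _ | x
  · exact absurd h (SubdivideEdge K u v).irrefl
  · simpa [Sym2.mem_iff] using subdivideEdge_adj_none_some.mp h

open Classical in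
/-- A walk of `K`, with each traversal of the edge `uv` routed through the new vertex. -/
noncomputable def subdivideWalk (K : SimpleGraph V) (u v : V) :
    {x y : V} → K.Walk x y → (SubdivideEdge K u v).Walk (some x) (some y)
  | _, _, .nil => .nil
  | x, _, .cons (v := z) h p =>
      if hc : s(x, z) = s(u, v) then
        .cons (subdivideEdge_adj_none_some.mpr (hc ▸ Sym2.mem_mk_left x z)).symm
          (.cons (subdivideEdge_adj_none_some.mpr (hc ▸ Sym2.mem_mk_right x z))
            (subdivideWalk K u v p))
      else .cons (subdivideEdge_adj_some_some.mpr ⟨h, hc⟩) (subdivideWalk K u v p)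

variable {x y : V}

lemma some_mem_support_subdivideWalk {z : V} (p : K.Walk x y) :
    some z ∈ (subdivideWalk K u v p).support ↔ z ∈ p.support := by
  induction p with
  | nil => simp [subdivideWalk]
  | cons h p ih => rw [subdivideWalk]; split_ifs <;> simp [ih]

lemma none_mem_support_subdivideWalk (p : K.Walk x y) :
    none ∈ (subdivideWalk K u v p).support ↔ s(u, v) ∈ p.edges := by
  induction p with
  | nil => simp [subdivideWalk]
  | cons h p ih =>
    rw [subdivideWalk]
    split_ifs with hc
    · simp [hc]
    · simp [ih, Ne.symm hc]

lemma mem_edges_subdivideWalk_some {a b : V} {p : K.Walk x y} (h : s(a, b) ∈ p.edges)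
    (hne : s(a, b) ≠ s(u, v)) : s(some a, some b) ∈ (subdivideWalk K u v p).edges := by
  induction p with
  | nil => simp at h
  | cons h' p ih =>
    rw [subdivideWalk]
    rw [Walk.edges_cons, List.mem_cons] at h
    split_ifs with hc
    · rcases h with h | h
      · exact absurd (h.trans hc) hne
      · simp [ih h]
    · rcases h with h | h
      · rw [Sym2.eq_iff] at h
        rcases h with ⟨rfl, rfl⟩ | ⟨rfl, rfl⟩ <;> simp
      · simp [ih h]

lemma mem_edges_subdivideWalk_none {a : V} {p : K.Walk x y} (h : s(u, v) ∈ p.edges)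
    (ha : a ∈ s(u, v)) : s(none, some a) ∈ (subdivideWalk K u v p).edges := by
  induction p with
  | nil => simp at h
  | cons h' p ih =>
    rw [subdivideWalk]
    rw [Walk.edges_cons, List.mem_cons] at h
    split_ifs with hc
    · rcases h with h | h
      · rw [← hc] at ha
        rcases Sym2.mem_iff.mp ha with rfl | rfl <;> simp [Sym2.eq_swap]
      · simp [ih h]
    · rcases h with h | h
      · exact absurd h.symm hc
      · simp [ih h]

lemma SimpleGraph.Walk.IsPath.subdivideWalk {p : K.Walk x y} (hp : p.IsPath) :
    (subdivideWalk K u v p).IsPath := by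
  induction p with
  | nil => exact Walk.IsPath.nil
  | cons h p ih =>
    rw [Walk.cons_isPath_iff] at hp
    rw [_root_.subdivideWalk]
    split_ifs with hc
    · refine ((ih hp.1).cons ?_).cons ?_
      · rw [none_mem_support_subdivideWalk]
        intro hmem
        rw [← hc] at hmem
        exact hp.2 (p.fst_mem_support_of_mem_edges hmem)
      · simp [some_mem_support_subdivideWalk, hp.2]
    · exact (ih hp.1).cons (by simpa [some_mem_support_subdivideWalk] using hp.2)

lemma InducedIsPath.subdivideEdge {a b : V} (huv : K.Adj u v) {T : Set (Option V)}
    (h : InducedIsPath K (some ⁻¹' T) a b) (hnone : none ∈ T ↔ some u ∈ T ∧ some v ∈ T) :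
    InducedIsPath (SubdivideEdge K u v) T (some a) (some b) := by
  obtain ⟨p, hp, hsupp, hedges⟩ := h
  have huvp : s(u, v) ∈ p.edges ↔ some u ∈ T ∧ some v ∈ T :=
    ⟨fun he => ⟨(hsupp u).mp (p.fst_mem_support_of_mem_edges he),
      (hsupp v).mp (p.snd_mem_support_of_mem_edges he)⟩,
      fun huvT => (hedges u v huvT.1 huvT.2).mp huv⟩
  have hnone_adj : ∀ y, none ∈ T → (SubdivideEdge K u v).Adj none (some y) →
      s(none, some y) ∈ (subdivideWalk K u v p).edges := fun y hw hadj =>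
    mem_edges_subdivideWalk_none (huvp.mpr (hnone.mp hw)) (subdivideEdge_adj_none_some.mp hadj)
  refine ⟨subdivideWalk K u v p, hp.subdivideWalk, ?_, fun x y hx hy => ⟨fun hxy => ?_,
    (subdivideWalk K u v p).adj_of_mem_edges⟩⟩
  · rintro (_ | z)
    · rw [none_mem_support_subdivideWalk, huvp, hnone]
    · rw [some_mem_support_subdivideWalk]; exact hsupp z
  rcases x with _ | x <;> rcases y with _ | y
  · exact absurd hxy (SubdivideEdge K u v).irrefl
  · exact hnone_adj y hx hxy
  · exact Sym2.eq_swap ▸ hnone_adj x hy hxy.symm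
  · obtain ⟨hK, hne⟩ := subdivideEdge_adj_some_some.mp hxy
    exact mem_edges_subdivideWalk_some ((hedges x y hx hy).mp hK) hne

lemma MinDegreeTwo.subdivideEdge (huv : K.Adj u v) (h : MinDegreeTwo K) :
    MinDegreeTwo (SubdivideEdge K u v) := by
  classical
  rintro (_ | x)
  · exact ⟨some u, some v, by simpa using huv.ne,
      subdivideEdge_adj_none_some.mpr (Sym2.mem_mk_left u v),
      subdivideEdge_adj_none_some.mpr (Sym2.mem_mk_right u v)⟩
  obtain ⟨y, z, hyz, hy, hz⟩ := h x
  let f : V → Option V := fun y => if s(x, y) = s(u, v) then none else some y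
  have hf : ∀ y, K.Adj x y → (SubdivideEdge K u v).Adj (some x) (f y) := fun y hy => by
    by_cases hc : s(x, y) = s(u, v)
    · rw [show f y = none from if_pos hc]
      exact (subdivideEdge_adj_none_some.mpr (hc ▸ Sym2.mem_mk_left x y)).symm
    · rw [show f y = some y from if_neg hc]
      exact subdivideEdge_adj_some_some.mpr ⟨hy, hc⟩
  refine ⟨f y, f z, ?_, hf y hy, hf z hz⟩
  simp only [f]
  split_ifs with hy' hz'
  · exact absurd (Sym2.congr_right.mp (hy'.trans hz'.symm)) hyz
  all_goals simp [hyz]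

lemma NoCutVertex.exists_walk_not_mem_edges (h : NoCutVertex K) (hmin : MinDegreeTwo K)
    (huv : K.Adj u v) (x y : V) : ∃ p : K.Walk x y, s(u, v) ∉ p.edges := by
  have hdirect : ∃ p : K.Walk u v, s(u, v) ∉ p.edges := by
    obtain ⟨z, huz, hzv⟩ := hmin.exists_adj_ne u v
    obtain ⟨q, hq⟩ := h u z v huz.ne' huv.ne'
    refine ⟨.cons huz q, ?_⟩
    simp only [Walk.edges_cons, List.mem_cons, not_or]
    exact ⟨fun he => hzv (Sym2.congr_right.mp he).symm,
      fun he => hq (q.fst_mem_support_of_mem_edges he)⟩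
  by_cases hv : x ≠ v ∧ y ≠ v
  · obtain ⟨p, hp⟩ := h v x y hv.1 hv.2
    exact ⟨p, fun he => hp (p.snd_mem_support_of_mem_edges he)⟩
  by_cases hu : x ≠ u ∧ y ≠ u
  · obtain ⟨p, hp⟩ := h u x y hu.1 hu.2
    exact ⟨p, fun he => hp (p.fst_mem_support_of_mem_edges he)⟩
  simp only [not_and_or, not_not] at hu hv
  rcases hv with rfl | rfl <;> rcases hu with rfl | rfl
  · exact absurd rfl huv.ne
  · obtain ⟨p, hp⟩ := hdirect
    exact ⟨p.reverse, by simpa [Sym2.eq_swap] using hp⟩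
  · exact hdirect
  · exact absurd rfl huv.ne

lemma NoCutVertex.subdivideEdge (huv : K.Adj u v) (hmin : MinDegreeTwo K) (h : NoCutVertex K) :
    NoCutVertex (SubdivideEdge K u v) := by
  rintro (_ | c) x y hx hy
  · obtain ⟨x, rfl⟩ := Option.ne_none_iff_exists'.mp hx
    obtain ⟨y, rfl⟩ := Option.ne_none_iff_exists'.mp hy
    obtain ⟨p, hp⟩ := h.exists_walk_not_mem_edges hmin huv x y
    exact ⟨subdivideWalk K u v p, by rwa [none_mem_support_subdivideWalk]⟩
  obtain ⟨n, hn, hnc⟩ := Sym2.exists_mem_ne_of_ne huv.ne c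
  have hstart : ∀ t : Option V, t ≠ some c →
      ∃ r : V, r ≠ c ∧ ∃ q : (SubdivideEdge K u v).Walk t (some r), some c ∉ q.support := by
    rintro (_ | t) ht
    · exact ⟨n, hnc, (subdivideEdge_adj_none_some.mpr hn).toWalk, by simp [Ne.symm hnc]⟩
    · exact ⟨t, fun h => ht (h ▸ rfl), .nil, by simpa using Ne.symm ht⟩
  obtain ⟨rx, hrx, qx, hqx⟩ := hstart x hx
  obtain ⟨ry, hry, qy, hqy⟩ := hstart y hy
  obtain ⟨p, hp⟩ := h c rx ry hrx hry
  refine ⟨qx.append ((subdivideWalk K u v p).append qy.reverse), ?_⟩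
  simp [Walk.mem_support_append_iff, some_mem_support_subdivideWalk, hqx, hqy, hp]

end Subdivision

namespace IsTwoSeparation

variable {V : Type} {K : SimpleGraph V} {u v a b : V} {T₁ T₂ : Set (Option V)}

lemma restrict_of_none_mem_left
    (hsep : IsTwoSeparation (SubdivideEdge K u v) (some a) (some b) T₁ T₂) (hw : none ∈ T₁)
    (hS : (some ⁻¹' T₁).Nonempty) : IsTwoSeparation K a b (some ⁻¹' T₁) (some ⁻¹' T₂) where
  ne h := hsep.ne (congrArg some h)
  union_eq := by ext z; simp [← Set.preimage_union, hsep.union_eq]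
  disjoint := hsep.disjoint.preimage some
  nonempty_left := hS
  nonempty_right := by
    obtain ⟨_ | t, ht⟩ := hsep.nonempty_right
    · exact absurd ht (hsep.disjoint.notMem_of_mem_left hw)
    · exact ⟨t, ht⟩
  not_adj x hx y hy hxy := by
    by_cases hc : s(x, y) = s(u, v)
    · exact hsep.not_adj none hw (some y) hy
        (subdivideEdge_adj_none_some.mpr (hc ▸ Sym2.mem_mk_right x y))
    · exact hsep.not_adj (some x) hx (some y) hy (subdivideEdge_adj_some_some.mpr ⟨hxy, hc⟩)

lemma end_mem_left_of_none_mem_left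
    (hsep : IsTwoSeparation (SubdivideEdge K u v) (some a) (some b) T₁ T₂) (hw : none ∈ T₁) :
    ∀ x ∈ s(u, v), some x ∈ T₁ ∨ x ∈ s(a, b) := by
  intro x hx
  by_cases hxab : x ∈ s(a, b)
  · exact .inr hxab
  have hx₁₂ := (hsep.mem_union_iff (z := some x)).mpr (by simpa [Sym2.mem_iff, not_or] using hxab)
  exact .inl (hx₁₂.resolve_right fun hx₂ =>
    hsep.not_adj none hw (some x) hx₂ (subdivideEdge_adj_none_some.mpr hx))

lemma pathSide_of_left_eq_none (huv : K.Adj u v)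
    (hsep : IsTwoSeparation (SubdivideEdge K u v) (some a) (some b) T₁ T₂) (hT₁ : T₁ = {none}) :
    InducedIsPath (SubdivideEdge K u v) (T₁ ∪ {some a, some b}) (some a) (some b) := by
  have hends : ∀ x ∈ s(u, v), x ∈ s(a, b) := fun x hx =>
    (hsep.end_mem_left_of_none_mem_left (hT₁ ▸ rfl) x hx).resolve_left (by simp [hT₁])
  have heq : s(a, b) = s(u, v) := (Sym2.mem_and_mem_iff huv.ne).mp
    ⟨hends u (Sym2.mem_mk_left u v), hends v (Sym2.mem_mk_right u v)⟩
  rw [hT₁, Set.singleton_union, Set.insert_comm]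
  refine (InducedIsPath.of_adj (subdivideEdge_adj_none_some.mpr (heq ▸ Sym2.mem_mk_right a b))).cons
    (subdivideEdge_adj_none_some.mpr (heq ▸ Sym2.mem_mk_left a b)).symm (by simp [hsep.ne]) ?_
  rintro x (rfl | rfl) h
  · rfl
  · exact absurd heq (subdivideEdge_adj_some_some.mp h).2

lemma pathSide_of_none_mem_left (huv : K.Adj u v) (hK : TwoSeparationHasPathSide K)
    (hsep : IsTwoSeparation (SubdivideEdge K u v) (some a) (some b) T₁ T₂) (hw : none ∈ T₁) :
    InducedIsPath (SubdivideEdge K u v) (T₁ ∪ {some a, some b}) (some a) (some b) ∨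
      InducedIsPath (SubdivideEdge K u v) (T₂ ∪ {some a, some b}) (some a) (some b) := by
  have hends := hsep.end_mem_left_of_none_mem_left hw
  by_cases hS : (some ⁻¹' T₁).Nonempty
  swap
  · refine .inl (hsep.pathSide_of_left_eq_none huv (Set.eq_singleton_iff_unique_mem.mpr ⟨hw, ?_⟩))
    rintro (_ | t) ht
    · rfl
    · exact absurd ⟨t, ht⟩ hS
  have hpre : ∀ T : Set (Option V), some ⁻¹' (T ∪ {some a, some b}) = some ⁻¹' T ∪ {a, b} := by
    intro T; ext; simp
  have hsepK := hsep.restrict_of_none_mem_left hw hS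
  rcases hK a b _ _ hsepK with hp | hp
  · have hmem : ∀ x ∈ s(u, v), some x ∈ T₁ ∪ {some a, some b} := fun x hx => by
      rcases hends x hx with h | h
      · exact .inl h
      · exact .inr (by simpa [Sym2.mem_iff] using h)
    exact .inl ((hpre T₁ ▸ hp).subdivideEdge huv
      (iff_of_true (.inl hw) ⟨hmem u (Sym2.mem_mk_left u v), hmem v (Sym2.mem_mk_right u v)⟩))
  -- `T₂` cannot contain both `u` and `v`: they would be `a` and `b`, and an induced
  -- `a`-`b` path with adjacent ends has no inner vertex
  refine .inr ((hpre T₂ ▸ hp).subdivideEdge huv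
    (iff_of_false (by simp [hsep.disjoint.notMem_of_mem_left hw]) ?_))
  have hends₂ : ∀ x ∈ s(u, v), some x ∈ T₂ ∪ {some a, some b} → x ∈ s(a, b) := by
    intro x hx hx₂
    rcases hends x hx with h | h
    · rcases hx₂ with h₂ | h₂
      · exact absurd h₂ (hsep.disjoint.notMem_of_mem_left h)
      · simpa [Sym2.mem_iff] using h₂
    · exact h
  rintro ⟨hu, hv⟩
  have hab : K.Adj a b := by
    rw [← K.mem_edgeSet, (Sym2.mem_and_mem_iff huv.ne).mp
      ⟨hends₂ u (Sym2.mem_mk_left u v) hu, hends₂ v (Sym2.mem_mk_right u v) hv⟩]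
    exact huv
  obtain ⟨t, ht⟩ := hsepK.nonempty_right
  obtain ⟨hta, htb⟩ := hsepK.mem_union_iff.mp (.inr ht)
  rcases hp.subset_pair_of_adj hab (.inl ht) with rfl | rfl
  · exact hta rfl
  · exact htb rfl

lemma restrict_of_eq_none
    (hsep : IsTwoSeparation (SubdivideEdge K u v) none (some b) T₁ T₂)
    (hu : some u ∈ T₁) (hv : some v ∈ T₂) (hS : (some ⁻¹' T₁ \ {u}).Nonempty) :
    IsTwoSeparation K u b (some ⁻¹' T₁ \ {u}) (some ⁻¹' T₂) where
  ne h := (hsep.mem_union_iff.mp (.inl hu)).2 (congrArg some h)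
  union_eq := by
    ext z
    have hz := hsep.mem_union_iff (z := some z)
    have hu₂ : some u ∉ T₂ := hsep.disjoint.notMem_of_mem_left hu
    simp only [Set.mem_union, Set.mem_sdiff, Set.mem_preimage, Set.mem_singleton_iff,
      Set.mem_ofPred_eq] at hz ⊢
    grind
  disjoint := (hsep.disjoint.preimage some).mono_left Set.sdiff_subset
  nonempty_left := hS
  nonempty_right := ⟨v, hv⟩
  not_adj x hx y hy hxy := by
    by_cases hc : s(x, y) = s(u, v)
    · have hxv : x = v := (Sym2.mem_iff.mp (hc ▸ Sym2.mem_mk_left x y)).resolve_left hx.2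
      exact hsep.disjoint.notMem_of_mem_left hx.1 (hxv ▸ hv)
    · exact hsep.not_adj (some x) hx.1 (some y) hy (subdivideEdge_adj_some_some.mpr ⟨hxy, hc⟩)

lemma pathSide_of_eq_none_of_left_eq (hmin : MinDegreeTwo K)
    (hsep : IsTwoSeparation (SubdivideEdge K u v) none (some b) T₁ T₂)
    (hT₁ : T₁ = {some u}) (hv : some v ∈ T₂) :
    InducedIsPath (SubdivideEdge K u v) (T₁ ∪ {none, some b}) none (some b) := by
  have hu : some u ∈ T₁ := hT₁ ▸ rfl
  -- `u` has a second neighbour besides `v`, and it can only be `b`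
  obtain ⟨t, hut, htv⟩ := hmin.exists_adj_ne u v
  have hut' : (SubdivideEdge K u v).Adj (some u) (some t) :=
    subdivideEdge_adj_some_some.mpr ⟨hut, fun h => htv (Sym2.congr_right.mp h)⟩
  have htb : t = b := by
    by_contra htb
    rcases (hsep.mem_union_iff (z := some t)).mpr ⟨by simp, by simpa using htb⟩ with ht | ht
    · rw [hT₁, Set.mem_singleton_iff, Option.some.injEq] at ht
      exact hut.ne ht.symm
    · exact hsep.not_adj _ hu _ ht hut'
  subst htb
  rw [hT₁, Set.singleton_union, Set.insert_comm]
  refine (InducedIsPath.of_adj hut').cons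
    (subdivideEdge_adj_none_some.mpr (Sym2.mem_mk_left u v)) (by simp) fun x hx hwx => ?_
  have hv' := hsep.mem_union_iff.mp (.inr hv)
  rcases subdivideEdge_eq_of_adj_none hwx with rfl | rfl
  · rfl
  · simp_all

lemma pathSide_of_eq_none_of_mem (huv : K.Adj u v) (hK : PathSided K)
    (hsep : IsTwoSeparation (SubdivideEdge K u v) none (some b) T₁ T₂)
    (hu : some u ∈ T₁) (hv : some v ∈ T₂) :
    InducedIsPath (SubdivideEdge K u v) (T₁ ∪ {none, some b}) none (some b) ∨
      InducedIsPath (SubdivideEdge K u v) (T₂ ∪ {none, some b}) none (some b) := by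
  have hv' := hsep.mem_union_iff.mp (.inr hv)
  have hv₁ : some v ∉ T₁ := hsep.disjoint.notMem_of_mem_right hv
  have hnone : none ∉ T₁ ∪ T₂ := fun h => (hsep.mem_union_iff.mp h).1 rfl
  have hwu : (SubdivideEdge K u v).Adj none (some u) :=
    subdivideEdge_adj_none_some.mpr (Sym2.mem_mk_left u v)
  by_cases hS : (some ⁻¹' T₁ \ {u}).Nonempty
  swap
  · refine .inl (hsep.pathSide_of_eq_none_of_left_eq hK.minDegreeTwo ?_ hv)
    refine Set.eq_singleton_iff_unique_mem.mpr ⟨hu, ?_⟩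
    rintro (_ | t) ht
    · exact absurd (.inl ht) hnone
    · by_contra htu
      exact hS ⟨t, ht, fun h => htu (congrArg some h)⟩
  rcases hK.twoSeparationHasPathSide u b _ _ (hsep.restrict_of_eq_none hu hv hS) with hp | hp
  · have hpre : some ⁻¹' (T₁ ∪ {some b}) = (some ⁻¹' T₁ \ {u}) ∪ {u, b} := by
      ext z; by_cases hz : z = u <;> simp [hz, hu]
    have hlift := (hpre ▸ hp).subdivideEdge huv
      (iff_of_false (by simp_all) (by simp [hv₁, hv'.2]))
    refine .inl ?_
    convert hlift.cons hwu (by simp_all) (fun x hx hwx => ?_) using 1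
    · ext; simp
    · rcases subdivideEdge_eq_of_adj_none hwx with rfl | rfl
      · rfl
      · simp [hv₁, hv'.2] at hx
  · have hpre : some ⁻¹' (T₂ ∪ {some u, none, some b}) = (some ⁻¹' T₂) ∪ {u, b} := by
      ext; simp
    have hlift := (hpre ▸ hp).subdivideEdge huv (iff_of_true (by simp) (by simp [hv]))
    refine .inr ?_
    convert hlift.tail hwu.symm (by simp) using 1
    ext z
    simp only [Set.union_insert, Set.union_singleton, Set.mem_insert_iff, Set.mem_singleton_iff,
      Set.insert_sdiff_of_mem, Set.mem_sdiff, iff_self_and]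
    rintro hz rfl
    have hu' := hsep.mem_union_iff.mp (.inl hu)
    rcases hz with h | h | h
    exacts [hu'.1 h, hu'.2 h, hsep.disjoint.notMem_of_mem_left hu h]

/-- Otherwise `b` would be a cut vertex of `K`. -/
lemma end_mem_right_of_eq_none (huv : K.Adj u v) (hK : NoCutVertex K)
    (hsep : IsTwoSeparation (SubdivideEdge K u v) none (some b) T₁ T₂) :
    some u ∈ T₂ ∨ some v ∈ T₂ := by
  by_contra! hends
  have hends' : ∀ x ∈ s(u, v), some x ∉ T₂ := by
    intro x hx
    rcases Sym2.mem_iff.mp hx with rfl | rfl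
    exacts [hends.1, hends.2]
  obtain ⟨_ | t, ht⟩ := hsep.nonempty_right
  · exact (hsep.mem_union_iff.mp (.inr ht)).1 rfl
  obtain ⟨m, hm, hmb⟩ := Sym2.exists_mem_ne_of_ne huv.ne b
  obtain ⟨x, hx, y, hy, hyb, hxy⟩ := hK.exists_adj_boundary (S := some ⁻¹' T₂) ht (hends' m hm)
    (fun h => (hsep.mem_union_iff.mp (.inr ht)).2 (congrArg some h)) hmb
  have hy₁ : some y ∈ T₁ :=
    (hsep.mem_union_iff.mpr ⟨by simp, by simpa using hyb⟩).resolve_right hy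
  refine hsep.not_adj _ hy₁ _ hx (subdivideEdge_adj_some_some.mpr ⟨hxy.symm, fun hc => ?_⟩)
  exact hends' x (hc ▸ Sym2.mem_mk_right y x) hx

lemma pathSide_of_eq_none (huv : K.Adj u v) (hK : PathSided K)
    (hsep : IsTwoSeparation (SubdivideEdge K u v) none (some b) T₁ T₂) :
    InducedIsPath (SubdivideEdge K u v) (T₁ ∪ {none, some b}) none (some b) ∨
      InducedIsPath (SubdivideEdge K u v) (T₂ ∪ {none, some b}) none (some b) := by
  rcases hsep.symm.end_mem_right_of_eq_none huv hK.noCutVertex with hu | hv <;>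
    rcases hsep.end_mem_right_of_eq_none huv hK.noCutVertex with hu' | hv'
  · exact absurd hu' (hsep.disjoint.notMem_of_mem_left hu)
  · exact hsep.pathSide_of_eq_none_of_mem huv hK hu hv'
  · rw [subdivideEdge_comm] at hsep ⊢
    exact hsep.pathSide_of_eq_none_of_mem huv.symm hK hv hu'
  · exact absurd hv' (hsep.disjoint.notMem_of_mem_left hv)

end IsTwoSeparation

lemma TwoSeparationHasPathSide.subdivideEdge {V : Type} {K : SimpleGraph V} {u v : V}
    (huv : K.Adj u v) (hK : PathSided K) : TwoSeparationHasPathSide (SubdivideEdge K u v) := by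
  rintro (_ | a) (_ | b) T₁ T₂ hsep
  · exact absurd rfl hsep.ne
  · exact hsep.pathSide_of_eq_none huv hK
  · rw [Set.pair_comm]
    exact (hsep.swap.pathSide_of_eq_none huv hK).imp InducedIsPath.symm InducedIsPath.symm
  · rcases hsep.mem_union_iff.mpr ⟨Option.some_ne_none a |>.symm, Option.some_ne_none b |>.symm⟩
      with hw | hw
    · exact hsep.pathSide_of_none_mem_left huv hK.twoSeparationHasPathSide hw
    · exact (hsep.symm.pathSide_of_none_mem_left huv hK.twoSeparationHasPathSide hw).symm

lemma PathSided.subdivideEdge {V : Type} {K : SimpleGraph V} {u v : V} (huv : K.Adj u v)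
    (hK : PathSided K) : PathSided (SubdivideEdge K u v) :=
  ⟨hK.minDegreeTwo.subdivideEdge huv, hK.noCutVertex.subdivideEdge huv hK.minDegreeTwo,
    .subdivideEdge huv hK⟩

lemma IsSubdivisionOf.pathSided {V W : Type} {G : SimpleGraph V} {H : SimpleGraph W}
    (h : IsSubdivisionOf G H) (hH : PathSided H) : PathSided G := by
  induction h with
  | iso e => exact hH.of_iso e
  | step u v huv _ ih => exact ih (hH.subdivideEdge huv)

theorem stmt_16_general {V : Type} (G : SimpleGraph V)
    (hK : IsSubdivisionOf G K5 ∨ IsSubdivisionOf G K33)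
    (a b : V) (hab : a ≠ b) (S1 S2 : Set V)
    (hpart : S1 ∪ S2 = {v | v ≠ a ∧ v ≠ b}) (hdisj : Disjoint S1 S2)
    (h1 : S1.Nonempty) (h2 : S2.Nonempty)
    (hsep : ∀ x ∈ S1, ∀ y ∈ S2, ¬ G.Adj x y) :
    InducedIsPath G (S1 ∪ {a, b}) a b ∨ InducedIsPath G (S2 ∪ {a, b}) a b := by
  have hG : PathSided G := hK.elim (·.pathSided pathSided_K5) (·.pathSided pathSided_K33)
  exact hG.twoSeparationHasPathSide a b S1 S2 ⟨hab, hpart, hdisj, h1, h2, hsep⟩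

/-- If `G` is homeomorphic to `K₅` or `K₃,₃` with cut set `{a, b}` and
`G - a,b = G₁ ⊔ G₂`, then one of the induced subgraphs on `V(G₁) ∪ {a,b}` and
`V(G₂) ∪ {a,b}` is an `a`-`b`-path. -/
theorem stmt_16 {V : Type} [Fintype V] (G : SimpleGraph V)
    (hK : IsSubdivisionOf G K5 ∨ IsSubdivisionOf G K33)
    (a b : V) (hab : a ≠ b) (S1 S2 : Set V)
    (hpart : S1 ∪ S2 = {v | v ≠ a ∧ v ≠ b}) (hdisj : Disjoint S1 S2)
    (h1 : S1.Nonempty) (h2 : S2.Nonempty)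
    (hsep : ∀ x ∈ S1, ∀ y ∈ S2, ¬ G.Adj x y) :
    InducedIsPath G (S1 ∪ {a, b}) a b ∨ InducedIsPath G (S2 ∪ {a, b}) a b :=
  stmt_16_general G hK a b hab S1 S2 hpart hdisj h1 h2 hsep
end
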